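/- Let N ∈ {3, 4, 5}. There exists a constant C > 0 such that for all real numbers k, l: |F(k+l) − F(k) − f(k)l − (1/2) f'(k) l²| ≤ C (|k|^{(6−N)/(N−2)} |l|³ + |l|^{2N/(N−2)}), where F(u) = ((N−2)/(2N))|u|^{2N/(N−2)}, f(u) = |u|^{4/(N−2)}u and f'(u) = ((N+2)/(N−2))|u|^{4/(N−2)}. -/

import Mathlib

/-!
With `q = 4 / (N - 2)`, which lies in `(1, 4]` exactly for `N ∈ {3, 4, 5}`, one has
`F u = |u|^(q+2) / (q+2)`, `F' = f = |u|^q u`, `f' = (q+1) |u|^q`, and, because `q > 1`,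
`f'' = (q+1) q |u|^(q-2) u` exists everywhere with `|f'' x| = (q+1) q |x|^(q-1)`.
On the segment from `k` to `k + l` this is at most `(q+1) q (|k| + |l|)^(q-1)`, so integrating
three times bounds the second-order Taylor remainder by that constant times `|l|^3`; finally
`(|k| + |l|)^(q-1) ≤ 2^(q-1) (|k|^(q-1) + |l|^(q-1))` and `|l|^(q-1) |l|^3 = |l|^(2N/(N-2))`.
-/

open Real

noncomputable def Fnl (N : ℕ) (u : ℝ) : ℝ :=
  (((N : ℝ) - 2) / (2 * (N : ℝ))) * |u| ^ (2 * (N : ℝ) / ((N : ℝ) - 2))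

noncomputable def fnl (N : ℕ) (u : ℝ) : ℝ :=
  |u| ^ ((4 : ℝ) / ((N : ℝ) - 2)) * u

noncomputable def fprime (N : ℕ) (u : ℝ) : ℝ :=
  (((N : ℝ) + 2) / ((N : ℝ) - 2)) * |u| ^ ((4 : ℝ) / ((N : ℝ) - 2))

theorem norm_sub_le_mul_abs_pow_succ {E : Type*} [NormedAddCommGroup E] [NormedSpace ℝ E]
    {g g' : ℝ → E} {C r t : ℝ} {n : ℕ} (hg : ∀ x, HasDerivAt g (g' x) x) (hC : 0 ≤ C)
    (hg' : ∀ x, |x| ≤ r → ‖g' x‖ ≤ C * |x| ^ n) (ht : |t| ≤ r) :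
    ‖g t - g 0‖ ≤ C * |t| ^ (n + 1) := by
  have hbound : ∀ x ∈ Set.uIcc 0 t, ‖g' x‖ ≤ C * |t| ^ n := fun x hx ↦ by
    have hxt : |x| ≤ |t| := by simpa using Set.abs_sub_left_of_mem_uIcc hx
    calc ‖g' x‖ ≤ C * |x| ^ n := hg' x (hxt.trans ht)
      _ ≤ C * |t| ^ n := by gcongr
  calc ‖g t - g 0‖ ≤ C * |t| ^ n * ‖t - 0‖ :=
        Convex.norm_image_sub_le_of_norm_hasDerivWithin_le (fun x _ ↦ (hg x).hasDerivWithinAt)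
          hbound (convex_uIcc 0 t) Set.left_mem_uIcc Set.right_mem_uIcc
    _ = C * |t| ^ (n + 1) := by rw [sub_zero, Real.norm_eq_abs]; ring

theorem abs_taylor_two_le {Φ φ P P' : ℝ → ℝ} {B : ℝ} (k l : ℝ)
    (hΦ : ∀ x, HasDerivAt Φ (φ x) x) (hφ : ∀ x, HasDerivAt φ (P x) x)
    (hP : ∀ x, HasDerivAt P (P' x) x) (hB : ∀ x, |x - k| ≤ |l| → |P' x| ≤ B) :
    |Φ (k + l) - Φ k - φ k * l - 1 / 2 * P k * l ^ 2| ≤ B * |l| ^ 3 := by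
  have hB0 : 0 ≤ B := (abs_nonneg _).trans (hB k (by simp))
  have shift {f f' : ℝ → ℝ} (hf : ∀ x, HasDerivAt f (f' x) x) (t : ℝ) :
      HasDerivAt (fun t ↦ f (k + t)) (f' (k + t)) t :=
    (hf (k + t)).comp_const_add k t
  have order0 (t : ℝ) (ht : |t| ≤ |l|) : |P (k + t) - P k| ≤ B * |t| ^ 1 := by
    simpa using norm_sub_le_mul_abs_pow_succ (n := 0) (shift hP) hB0
      (fun x hx ↦ by simpa using hB (k + x) (by simpa using hx)) ht
  have order1 (t : ℝ) (ht : |t| ≤ |l|) : |φ (k + t) - φ k - P k * t| ≤ B * |t| ^ 2 := by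
    simpa using norm_sub_le_mul_abs_pow_succ (g := fun t ↦ φ (k + t) - φ k - P k * t)
      (fun x ↦ (((shift hφ x).sub_const (φ k)).sub ((hasDerivAt_id' x).const_mul (P k))).congr_deriv
        (by ring))
      hB0 order0 ht
  have order2 := norm_sub_le_mul_abs_pow_succ
    (g := fun t ↦ Φ (k + t) - Φ k - φ k * t - 1 / 2 * P k * t ^ 2)
    (fun x ↦ ((((shift hΦ x).sub_const (Φ k)).sub ((hasDerivAt_id' x).const_mul (φ k))).sub
      ((hasDerivAt_pow 2 x).const_mul (1 / 2 * P k))).congr_deriv (by ring))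
    hB0 order1 le_rfl
  simpa using order2

theorem rpow_add_le_two_rpow_mul_add {a b p : ℝ} (ha : 0 ≤ a) (hb : 0 ≤ b) (hp : 0 ≤ p) :
    (a + b) ^ p ≤ 2 ^ p * (a ^ p + b ^ p) := by
  wlog hab : a ≤ b generalizing a b
  · simpa only [add_comm] using this hb ha (le_of_not_ge hab)
  calc (a + b) ^ p ≤ (2 * b) ^ p := by gcongr; linarith
    _ = 2 ^ p * b ^ p := Real.mul_rpow zero_le_two hb
    _ ≤ 2 ^ p * (a ^ p + b ^ p) := by gcongr; exact le_add_of_nonneg_left (by positivity)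

section AbsRpow

variable {q : ℝ}

theorem hasDerivAt_one_div_mul_abs_rpow_add_two (hq : -1 < q) (x : ℝ) :
    HasDerivAt (fun u ↦ 1 / (q + 2) * |u| ^ (q + 2)) (|x| ^ q * x) x :=
  ((hasDerivAt_abs_rpow x (by linarith)).const_mul (1 / (q + 2))).congr_deriv (by
    rw [add_sub_cancel_right]
    field_simp [show q + 2 ≠ 0 by linarith])

theorem abs_rpow_sub_two_mul_self (hq : q ≠ 0) (x : ℝ) : |x| ^ (q - 2) * x * x = |x| ^ q := by
  calc |x| ^ (q - 2) * x * x = |x| ^ (q - 2) * |x| ^ (2 : ℝ) := by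
        rw [rpow_two, sq_abs]; ring
    _ = |x| ^ q := by rw [← rpow_add' (abs_nonneg x) (by simpa), sub_add_cancel]

theorem hasDerivAt_abs_rpow_mul_self (hq : 1 < q) (x : ℝ) :
    HasDerivAt (fun u ↦ |u| ^ q * u) ((q + 1) * |x| ^ q) x :=
  ((hasDerivAt_abs_rpow x hq).mul (hasDerivAt_id' x)).congr_deriv (by
    linear_combination q * abs_rpow_sub_two_mul_self (by linarith : q ≠ 0) x)

theorem abs_mul_abs_rpow_sub_two_mul (hq : 1 < q) (x : ℝ) :
    |q * |x| ^ (q - 2) * x| = q * |x| ^ (q - 1) := by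
  rw [abs_mul, abs_mul, abs_of_pos (by linarith : 0 < q), abs_of_nonneg (by positivity),
    mul_assoc, ← rpow_add_one' (abs_nonneg x) (by linarith)]
  ring_nf

theorem abs_taylor_two_abs_rpow_le (hq : 1 < q) (k l : ℝ) :
    |1 / (q + 2) * |k + l| ^ (q + 2) - 1 / (q + 2) * |k| ^ (q + 2) - |k| ^ q * k * l -
        1 / 2 * ((q + 1) * |k| ^ q) * l ^ 2| ≤
      (q + 1) * q * 2 ^ (q - 1) * (|k| ^ (q - 1) * |l| ^ 3 + |l| ^ (q + 2)) := by
  have hthird (x : ℝ) (hx : |x - k| ≤ |l|) :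
      |(q + 1) * (q * |x| ^ (q - 2) * x)| ≤ (q + 1) * q * (|k| + |l|) ^ (q - 1) := by
    have hxkl : |x| ≤ |k| + |l| := by linarith [abs_sub_abs_le_abs_sub x k]
    rw [abs_mul, abs_mul_abs_rpow_sub_two_mul hq, abs_of_pos (by linarith), ← mul_assoc]
    gcongr
  have hl3 : |l| ^ (q - 1) * |l| ^ 3 = |l| ^ (q + 2) := by
    rw [← rpow_add_natCast' (abs_nonneg l) (by push_cast; linarith)]
    norm_num [sub_add]
  calc _ ≤ (q + 1) * q * (|k| + |l|) ^ (q - 1) * |l| ^ 3 :=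
        abs_taylor_two_le k l (hasDerivAt_one_div_mul_abs_rpow_add_two (by linarith))
          (hasDerivAt_abs_rpow_mul_self hq) (fun x ↦ (hasDerivAt_abs_rpow x hq).const_mul _)
          hthird
    _ ≤ (q + 1) * q * (2 ^ (q - 1) * (|k| ^ (q - 1) + |l| ^ (q - 1))) * |l| ^ 3 := by
        gcongr
        exact rpow_add_le_two_rpow_mul_add (abs_nonneg k) (abs_nonneg l) (by linarith)
    _ = _ := by rw [← hl3]; ring

end AbsRpow

theorem F_taylor_lowdim (N : ℕ) (hN : N = 3 ∨ N = 4 ∨ N = 5) :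
    ∃ C > (0 : ℝ), ∀ k l : ℝ,
      |Fnl N (k + l) - Fnl N k - fnl N k * l - (1 / 2) * fprime N k * l ^ 2| ≤
        C * (|k| ^ (((6 : ℝ) - N) / ((N : ℝ) - 2)) * |l| ^ 3 +
          |l| ^ (2 * (N : ℝ) / ((N : ℝ) - 2))) := by
  have hN2 : (0 : ℝ) < N - 2 := by rcases hN with rfl | rfl | rfl <;> norm_num
  have hN6 : (N : ℝ) - 2 < 4 := by rcases hN with rfl | rfl | rfl <;> norm_num
  have hN0 : (N : ℝ) ≠ 0 := by linarith
  obtain ⟨q, hq_def⟩ : ∃ q, 4 / ((N : ℝ) - 2) = q := ⟨_, rfl⟩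
  have hq : 1 < q := hq_def ▸ (one_lt_div hN2).2 hN6
  have hF : ((N : ℝ) - 2) / (2 * N) = 1 / (q + 2) := by subst hq_def; field_simp; ring
  have hF_exp : 2 * (N : ℝ) / (N - 2) = q + 2 := by subst hq_def; field_simp; ring
  have hf' : ((N : ℝ) + 2) / (N - 2) = q + 1 := by subst hq_def; field_simp; ring
  have hk_exp : (6 - (N : ℝ)) / (N - 2) = q - 1 := by subst hq_def; field_simp; ring
  refine ⟨(q + 1) * q * 2 ^ (q - 1), by positivity, fun k l ↦ ?_⟩
  simpa only [Fnl, fnl, fprime, hq_def, hF, hF_exp, hf', hk_exp] using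
    abs_taylor_two_abs_rpow_le hq k l
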